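/- The matrix A_odd defined by A_odd(i,j) = 1 if W_H(i) and W_H(j) have different parity and 0 otherwise, is (up to a permutation of indices, i.e., unitary conjugation by a permutation matrix) equal to the tensor product J^{⊗(n-1)} ⊗ X, where J is the 2×2 all-ones matrix and X is the 2×2 matrix with 0 on the diagonal and 1 off-diagonal. -/

import Mathlib

open Matrix Finset
open scoped ComplexOrder Kronecker

/-- Trace norm `tr √(Aᴴ A)` of a complex square matrix. -/
noncomputable def traceNorm {ι : Type*} [Fintype ι] [DecidableEq ι] (A : Matrix ι ι ℂ) : ℝ :=
  (((Matrix.posSemidef_conjTranspose_mul_self A).1.eigenvectorUnitary.1 *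
      diagonal (((↑) : ℝ → ℂ) ∘ Real.sqrt ∘ (Matrix.posSemidef_conjTranspose_mul_self A).1.eigenvalues) *
      (star (Matrix.posSemidef_conjTranspose_mul_self A).1.eigenvectorUnitary : Matrix ι ι ℂ)).trace).re

/-- Bitwise XOR on bit strings. -/
def xo {n : ℕ} (i k : Fin n → Bool) : Fin n → Bool := fun j => xor (i j) (k j)

/-- Hamming weight of a bit string. -/
def wt {n : ℕ} (i : Fin n → Bool) : ℕ := (Finset.univ.filter fun j => i j = true).card

/-- The rank-one operator `|i⟩⟨j|`. -/
def ketbra {n : ℕ} (i j : Fin n → Bool) : Matrix (Fin n → Bool) (Fin n → Bool) ℂ :=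
  Matrix.single i j 1

/-- `ρ⁰_{k,i} = ½(|i⟩+|i⊕k⟩)(⟨i|+⟨i⊕k|)`. -/
noncomputable def rho0 {n : ℕ} (k i : Fin n → Bool) : Matrix (Fin n → Bool) (Fin n → Bool) ℂ :=
  (1/2 : ℂ) • (ketbra i i + ketbra i (xo i k) + ketbra (xo i k) i + ketbra (xo i k) (xo i k))

/-- `ρ¹_{k,i} = ½(|i⟩-|i⊕k⟩)(⟨i|-⟨i⊕k|)`. -/
noncomputable def rho1 {n : ℕ} (k i : Fin n → Bool) : Matrix (Fin n → Bool) (Fin n → Bool) ℂ :=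
  (1/2 : ℂ) • (ketbra i i - ketbra i (xo i k) - ketbra (xo i k) i + ketbra (xo i k) (xo i k))

/-- `Ω_n`, the set of bit strings of odd Hamming weight. -/
def Omega (n : ℕ) : Finset (Fin n → Bool) := Finset.univ.filter fun k => Odd (wt k)

/-! Replacing the last bit of a string by its total weight parity identifies `{0,1}^(m+1)` with
`{0,1}^m × {0,1}`. In these coordinates `A_odd` only compares the parity bits, which is exactly
the entry of `J ⊗ X`. -/

lemma wt_snoc {m : ℕ} (p : Fin m → Bool) (c : Bool) :
    wt (Fin.snoc p c : Fin (m + 1) → Bool) = wt p + c.toNat := by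
  simp only [wt, Finset.card_filter, Fin.sum_univ_castSucc, Fin.snoc_castSucc, Fin.snoc_last]
  cases c <;> rfl

lemma bodd_wt_snoc {m : ℕ} (p : Fin m → Bool) (c : Bool) :
    (wt (Fin.snoc p c : Fin (m + 1) → Bool)).bodd = xor (wt p).bodd c := by
  rw [wt_snoc, Nat.bodd_add]
  cases c <;> rfl

def paritySnocEquiv (m : ℕ) : (Fin m → Bool) × Bool ≃ (Fin (m + 1) → Bool) where
  toFun pb := Fin.snoc pb.1 (xor (wt pb.1).bodd pb.2)
  invFun x := (Fin.init x, (wt x).bodd)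
  left_inv pb := by simp [bodd_wt_snoc]
  right_inv x := by
    have h := bodd_wt_snoc (Fin.init x) (x (Fin.last m))
    rw [Fin.snoc_init_self] at h
    simp [h]

lemma bodd_wt_paritySnocEquiv {m : ℕ} (p : Fin m → Bool) (b : Bool) :
    (wt (paritySnocEquiv m (p, b))).bodd = b := by
  simp [paritySnocEquiv, bodd_wt_snoc]

lemma mod_two_ne_mod_two_iff_bodd_ne (a b : ℕ) : a % 2 ≠ b % 2 ↔ a.bodd ≠ b.bodd := by
  rw [Nat.mod_two_of_bodd, Nat.mod_two_of_bodd]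
  cases a.bodd <;> cases b.bodd <;> decide

theorem parity_matrix_eq_tensor (n : ℕ) (hn : 1 ≤ n)
    (A : Matrix (Fin n → Bool) (Fin n → Bool) ℂ)
    (hA : ∀ i j, A i j = if wt i % 2 ≠ wt j % 2 then 1 else 0)
    (J : Matrix (Fin (n-1) → Bool) (Fin (n-1) → Bool) ℂ) (hJ : ∀ i j, J i j = 1)
    (X : Matrix Bool Bool ℂ) (hX : ∀ b c, X b c = if b = c then 0 else 1) :
    ∃ e : ((Fin (n-1) → Bool) × Bool) ≃ (Fin n → Bool),
      A.submatrix e e = J ⊗ₖ X := by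
  obtain ⟨m, rfl⟩ : ∃ m, n = m + 1 := ⟨n - 1, by omega⟩
  refine ⟨paritySnocEquiv m, ?_⟩
  ext ⟨p, b⟩ ⟨q, c⟩
  simp only [submatrix_apply, hA, mod_two_ne_mod_two_iff_bodd_ne, bodd_wt_paritySnocEquiv,
    kroneckerMap_apply, hJ, hX, one_mul, ite_not]
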